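/- arXiv:2604.15198 — 2 statements merged into one kernel-verified Lean document; each statement's English description precedes it below -/
import Mathlib

section
/- Fix ν ≥ 1 and 0 < k < ν. The function F(r,t) = χ_{k/2, (ν-k)/2}(r²/(4t)) / (2^k Γ(k/2) t^{k/2}), defined for r, t > 0, satisfies the radially symmetric heat equation ∂F/∂t = ∂²F/∂r² + ((ν-1)/r) ∂F/∂r. -/
/-!
Differentiating under the integral sign gives `χ_{a,b}' = -χ_{a+1,b}`, and integrating the
derivative of `x^a (1-x)^b e^{-ux}` over `[0,1]` (it vanishes at both ends) gives Kummer's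
equation `u χ'' + (a+b+u) χ' + a χ = 0`. For `F(r,t) = t^{-a} φ(r²/(4t))` and `u = r²/(4t)`,
both sides of the radial heat equation are `t^{-a-1}` times a combination of `φ, φ', φ''`, and
their difference is `-(u φ'' + (ν/2 + u) φ' + a φ)`. With `a = k/2`, `b = (ν-k)/2` we have
`a + b = ν/2`, so Kummer's equation is exactly what is needed; the constant `2^k Γ(k/2)` plays
no role since the equation is linear.
-/

open MeasureTheory Set Real

theorem hasDerivAt_integral_mul_exp_neg_mul {w : ℝ → ℝ} (hw : IntervalIntegrable w volume 0 1)
    (u : ℝ) :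
    HasDerivAt (fun v => ∫ x in (0:ℝ)..1, w x * exp (-v * x))
      (-∫ x in (0:ℝ)..1, x * w x * exp (-u * x)) u := by
  have hw_meas := hw.aestronglyMeasurable_restrict_uIoc
  have hmeas (v : ℝ) : AEStronglyMeasurable (fun x => w x * exp (-v * x))
      (volume.restrict (uIoc 0 1)) := by fun_prop
  have hbound : ∀ x ∈ uIoc (0:ℝ) 1, ∀ v ∈ Metric.ball u 1,
      ‖-(x * w x * exp (-v * x))‖ ≤ ‖w x‖ * exp (|u| + 1) := by
    intro x hx v hv
    rw [uIoc_of_le zero_le_one] at hx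
    rw [Metric.mem_ball, Real.dist_eq] at hv
    have hv' : |v| ≤ |u| + 1 := by linarith [abs_sub_abs_le_abs_sub v u]
    have hvx : -v * x ≤ |u| + 1 := by
      nlinarith [hv', neg_abs_le v, mul_le_mul_of_nonneg_left hx.2 (abs_nonneg v), hx.1]
    rw [norm_neg, norm_mul, norm_mul, Real.norm_of_nonneg hx.1.le,
      Real.norm_of_nonneg (exp_pos _).le]
    calc x * ‖w x‖ * exp (-v * x) ≤ 1 * ‖w x‖ * exp (|u| + 1) := by gcongr; exact hx.2
      _ = ‖w x‖ * exp (|u| + 1) := by ring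
  have hderiv : ∀ x ∈ uIoc (0:ℝ) 1, ∀ v ∈ Metric.ball u 1,
      HasDerivAt (fun v => w x * exp (-v * x)) (-(x * w x * exp (-v * x))) v := by
    intro x _ v _
    exact (((hasDerivAt_neg v).mul_const x).exp.const_mul (w x)).congr_deriv (by ring)
  have h := intervalIntegral.hasDerivAt_integral_of_dominated_loc_of_deriv_le (μ := volume)
    (Metric.ball_mem_nhds u one_pos) (.of_forall hmeas) (hw.mul_continuousOn (by fun_prop))
    (by fun_prop) (.of_forall hbound) (hw.norm.mul_const _) (.of_forall hderiv)
  simpa only [intervalIntegral.integral_neg] using h.2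

section Kummer

variable {a b : ℝ}

theorem intervalIntegrable_rpow_mul_one_sub_rpow (ha : 0 < a) (hb : 0 < b) :
    IntervalIntegrable (fun x : ℝ => x ^ (a - 1) * (1 - x) ^ (b - 1)) volume 0 1 := by
  refine (Complex.betaIntegral_convergent (u := a) (v := b) (by simpa) (by simpa)).norm.congr_uIoo
    fun x hx => ?_
  rw [uIoo_of_le zero_le_one] at hx
  have h1x : (1 - (x : ℂ)) = ((1 - x : ℝ) : ℂ) := by push_cast; ring
  simp only [norm_mul, h1x, Complex.norm_cpow_eq_rpow_re_of_pos hx.1,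
    Complex.norm_cpow_eq_rpow_re_of_pos (sub_pos.mpr hx.2)]
  simp

noncomputable def kummerChi (a b u : ℝ) : ℝ :=
  ∫ x in (0:ℝ)..1, x ^ (a - 1) * (1 - x) ^ (b - 1) * exp (-u * x)

theorem intervalIntegrable_kummerChi_integrand (ha : 0 < a) (hb : 0 < b) (u : ℝ) :
    IntervalIntegrable (fun x => x ^ (a - 1) * (1 - x) ^ (b - 1) * exp (-u * x)) volume 0 1 :=
  (intervalIntegrable_rpow_mul_one_sub_rpow ha hb).mul_continuousOn (by fun_prop)

theorem hasDerivAt_kummerChi (ha : 0 < a) (hb : 0 < b) (u : ℝ) :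
    HasDerivAt (kummerChi a b) (-kummerChi (a + 1) b u) u := by
  have hmoment : kummerChi (a + 1) b u
      = ∫ x in (0:ℝ)..1, x * (x ^ (a - 1) * (1 - x) ^ (b - 1)) * exp (-u * x) := by
    refine intervalIntegral.integral_congr fun x hx => ?_
    rw [uIcc_of_le zero_le_one] at hx
    have hxa : x ^ a = x * x ^ (a - 1) := by
      simpa [mul_comm] using rpow_add_one' hx.1 (y := a - 1) (by linarith)
    simp only [add_sub_cancel_right, hxa, mul_assoc]
  rw [hmoment]
  exact hasDerivAt_integral_mul_exp_neg_mul (intervalIntegrable_rpow_mul_one_sub_rpow ha hb) u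

theorem kummerChi_recurrence (ha : 0 < a) (hb : 0 < b) (u : ℝ) :
    u * kummerChi (a + 1 + 1) b u - (a + b + u) * kummerChi (a + 1) b u + a * kummerChi a b u
      = 0 := by
  set w : ℝ → ℝ → ℝ := fun c x => x ^ (c - 1) * (1 - x) ^ (b - 1) * exp (-u * x) with hw
  have hint (c : ℝ) (hc : 0 < c) := intervalIntegrable_kummerChi_integrand hc hb u
  have i0 := hint a ha
  have i1 := hint (a + 1) (by linarith)
  have i2 := hint (a + 1 + 1) (by linarith)
  have hP := ((i2.const_mul u).sub (i1.const_mul (a + b + u))).add (i0.const_mul a)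
  have hderiv : ∀ x ∈ Ioo (0:ℝ) 1, HasDerivAt (fun x => x ^ a * (1 - x) ^ b * exp (-u * x))
      (u * w (a + 1 + 1) x - (a + b + u) * w (a + 1) x + a * w a x) x := by
    intro x ⟨hx0, hx1⟩
    have h : HasDerivAt (fun x => x ^ a * (1 - x) ^ b * exp (-u * x)) _ x :=
      ((hasDerivAt_rpow_const (p := a) (Or.inl hx0.ne')).mul
      ((hasDerivAt_rpow_const (p := b) (Or.inl (sub_pos.mpr hx1).ne')).comp x
        ((hasDerivAt_id x).const_sub 1))).mul ((hasDerivAt_id x).const_mul (-u)).exp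
    refine h.congr_deriv ?_
    simp only [hw, add_sub_cancel_right, rpow_sub_one hx0.ne', rpow_sub_one (sub_pos.mpr hx1).ne',
      rpow_add_one hx0.ne', id, Function.comp_apply, Pi.mul_apply]
    field_simp
    ring
  have hcont : ContinuousOn (fun x => x ^ a * (1 - x) ^ b * exp (-u * x)) (Icc 0 1) :=
    ((continuous_id.rpow_const fun _ => Or.inr ha.le).mul
      ((continuous_const.sub continuous_id).rpow_const fun _ => Or.inr hb.le)).mul
      (by fun_prop) |>.continuousOn
  have hFTC := intervalIntegral.integral_eq_sub_of_hasDerivAt_of_le zero_le_one hcont hderiv hP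
  rw [intervalIntegral.integral_add ((i2.const_mul u).sub (i1.const_mul (a + b + u)))
      (i0.const_mul a), intervalIntegral.integral_sub (i2.const_mul u) (i1.const_mul (a + b + u)),
    intervalIntegral.integral_const_mul, intervalIntegral.integral_const_mul,
    intervalIntegral.integral_const_mul] at hFTC
  refine hFTC.trans ?_
  simp [zero_rpow ha.ne', zero_rpow hb.ne']

end Kummer

theorem radial_heat_of_kummer_ode {φ φ' φ'' : ℝ → ℝ} {ν a : ℝ}
    (hφ : ∀ u, HasDerivAt φ (φ' u) u) (hφ' : ∀ u, HasDerivAt φ' (φ'' u) u)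
    (hode : ∀ u > 0, u * φ'' u + (ν / 2 + u) * φ' u + a * φ u = 0) {r t : ℝ}
    (hr : 0 < r) (ht : 0 < t) :
    deriv (fun s => φ (r ^ 2 / (4 * s)) / s ^ a) t =
      deriv (fun q => deriv (fun q' => φ (q' ^ 2 / (4 * t)) / t ^ a) q) r
        + ((ν - 1) / r) * deriv (fun q => φ (q ^ 2 / (4 * t)) / t ^ a) r := by
  set u := r ^ 2 / (4 * t) with hu
  have hu_t : HasDerivAt (fun s => r ^ 2 / (4 * s)) (-u / t) t :=
    ((hasDerivAt_const t (r ^ 2)).div ((hasDerivAt_id t).const_mul 4) (by positivity)).congr_deriv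
      (by simp only [hu, id]; field_simp; ring)
  have hu_r (q : ℝ) : HasDerivAt (fun q => q ^ 2 / (4 * t)) (q / (2 * t)) q :=
    ((hasDerivAt_pow 2 q).div_const (4 * t)).congr_deriv (by field_simp; ring)
  have hF_t : HasDerivAt (fun s => φ (r ^ 2 / (4 * s)) / s ^ a)
      ((φ' u * (-u / t) * t ^ a - φ u * (a * t ^ (a - 1))) / (t ^ a) ^ 2) t :=
    ((hφ _).comp t hu_t).div (hasDerivAt_rpow_const (Or.inl ht.ne')) (by positivity)
  have hF_r (q : ℝ) : HasDerivAt (fun q => φ (q ^ 2 / (4 * t)) / t ^ a)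
      (φ' (q ^ 2 / (4 * t)) * (q / (2 * t)) / t ^ a) q :=
    ((hφ _).comp q (hu_r q)).div_const (t ^ a)
  have hF_rr : HasDerivAt (fun q => φ' (q ^ 2 / (4 * t)) * (q / (2 * t)) / t ^ a)
      ((φ'' u * (r / (2 * t)) * (r / (2 * t)) + φ' u * (1 / (2 * t))) / t ^ a) r :=
    (((hφ' _).comp r (hu_r r)).mul ((hasDerivAt_id r).div_const (2 * t))).div_const (t ^ a)
  rw [hF_t.deriv, (hF_r r).deriv, funext fun q => (hF_r q).deriv, hF_rr.deriv,
    rpow_sub_one ht.ne', ← hu]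
  have hr2 : r ^ 2 = 4 * t * u := by rw [hu]; field_simp
  field_simp
  linear_combination (-4 * t) * hode u (by positivity) - φ'' u * hr2

theorem stmt5_general (ν k : ℝ) (hk : 0 < k) (hkν : k < ν)
    (χ : ℝ → ℝ)
    (hχ : χ = fun u => ∫ x in (0:ℝ)..1,
      x ^ (k / 2 - 1) * (1 - x) ^ ((ν - k) / 2 - 1) * Real.exp (-u * x))
    (F : ℝ → ℝ → ℝ)
    (hF : F = fun r t => χ (r ^ 2 / (4 * t)) / ((2:ℝ) ^ k * Real.Gamma (k / 2) * t ^ (k / 2))) :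
    ∀ r > (0:ℝ), ∀ t > (0:ℝ),
      deriv (fun s => F r s) t
        = deriv (fun q => deriv (fun q' => F q' t) q) r
          + ((ν - 1) / r) * deriv (fun q => F q t) r := by
  intro r hr t ht
  have ha : 0 < k / 2 := by linarith
  have hb : 0 < (ν - k) / 2 := by linarith
  set C := (2:ℝ) ^ k * Gamma (k / 2)
  have hFC :
      F = fun q s => kummerChi (k / 2) ((ν - k) / 2) (q ^ 2 / (4 * s)) / C / s ^ (k / 2) := by
    subst hF hχ
    funext q s
    exact div_mul_eq_div_div _ _ _
  subst hFC
  refine radial_heat_of_kummer_ode (φ' := fun u => -kummerChi (k / 2 + 1) ((ν - k) / 2) u / C)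
    (φ'' := fun u => kummerChi (k / 2 + 1 + 1) ((ν - k) / 2) u / C)
    (fun u => (hasDerivAt_kummerChi ha hb u).div_const C)
    (fun u => ((hasDerivAt_kummerChi (by linarith) hb u).neg.div_const C).congr_deriv (by ring))
    (fun u _ => ?_) hr ht
  linear_combination kummerChi_recurrence ha hb u / C

/-- For `ν ≥ 1` and `0 < k < ν`, the function
`F(r,t) = χ_{k/2,(ν-k)/2}(r²/(4t)) / (2^k Γ(k/2) t^(k/2))` solves the radially
symmetric heat equation `∂_t F = ∂_r² F + ((ν-1)/r) ∂_r F` for `r, t > 0`. -/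
theorem stmt5 (ν k : ℝ) (hν : 1 ≤ ν) (hk : 0 < k) (hkν : k < ν)
    (χ : ℝ → ℝ)
    (hχ : χ = fun u => ∫ x in (0:ℝ)..1,
      x ^ (k / 2 - 1) * (1 - x) ^ ((ν - k) / 2 - 1) * Real.exp (-u * x))
    (F : ℝ → ℝ → ℝ)
    (hF : F = fun r t => χ (r ^ 2 / (4 * t)) / ((2:ℝ) ^ k * Real.Gamma (k / 2) * t ^ (k / 2))) :
    ∀ r > (0:ℝ), ∀ t > (0:ℝ),
      deriv (fun s => F r s) t
        = deriv (fun q => deriv (fun q' => F q' t) q) r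
          + ((ν - 1) / r) * deriv (fun q => F q t) r :=
  stmt5_general ν k hk hkν χ hχ F hF
end

section
/- With F(r,t) = χ_{k/2,(ν-k)/2}(r²/(4t))/(2^k Γ(k/2) t^{k/2}) for ν ≥ 1, 0 < k < ν, there exist constants c_{k,ν}, C_{k,ν} > 0 such that c_{k,ν}(r² + t)^{-k/2} ≤ F(r,t) ≤ C_{k,ν}(r² + t)^{-k/2} for all r, t > 0. -/
/-!
With `a = k/2`, `b = (ν - k)/2` and `u = r²/(4t)` we have
`F(r,t) = χ_{a,b}(u) / (2^k Γ(a) t^a)` and `t(1 + u) ≤ r² + t ≤ 4t(1 + u)`,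
so it suffices that `χ_{a,b}(u) ≍ (1 + u)^{-a}` for `u ≥ 0`.
Near `x = 0` the integrand is comparable to `x^{a-1} e^{-ux}`. Restricting to
`[0, 1/(2(1 + u))]`, where `e^{-ux} ≥ e^{-1/2}`, gives the lower bound; on `[0, 1/2]` we have
`e^{-ux} ≤ e^{1/2} e^{-(1+u)x}`, so that half is at most a multiple of the Gamma integral
`Γ(a) (1 + u)^{-a}`. On `[1/2, 1]` the factor `e^{-ux} ≤ e^{-u/2}` decays faster than
any power of `1 + u`.
-/

open Real Set MeasureTheory intervalIntegral

lemma abs_log_le_log_two {x : ℝ} (hx : 1 / 2 ≤ x) (hx1 : x ≤ 1) : |log x| ≤ log 2 := by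
  rw [abs_of_nonpos (log_nonpos (by linarith) hx1), neg_le, ← log_inv]
  exact log_le_log (by norm_num) (by linarith)

lemma rpow_le_two_rpow_abs {x : ℝ} (c : ℝ) (hx : 1 / 2 ≤ x) (hx1 : x ≤ 1) :
    x ^ c ≤ 2 ^ |c| := by
  rw [rpow_def_of_pos (by linarith), rpow_def_of_pos two_pos, exp_le_exp]
  calc log x * c ≤ |log x| * |c| := by rw [← abs_mul]; exact le_abs_self _
    _ ≤ log 2 * |c| := by gcongr; exact abs_log_le_log_two hx hx1

lemma two_rpow_neg_abs_le_rpow {x : ℝ} (c : ℝ) (hx : 1 / 2 ≤ x) (hx1 : x ≤ 1) :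
    2 ^ (-|c|) ≤ x ^ c := by
  rw [rpow_def_of_pos two_pos, rpow_def_of_pos (by linarith : 0 < x), exp_le_exp]
  calc log 2 * -|c| ≤ -(|log x| * |c|) := by
        rw [mul_neg, neg_le_neg_iff]; gcongr; exact abs_log_le_log_two hx hx1
    _ ≤ log x * c := by rw [← abs_mul]; exact neg_abs_le _

lemma rpow_le_rpow_self_mul_exp {a s : ℝ} (ha : 0 < a) (hs : 0 ≤ s) :
    s ^ a ≤ a ^ a * exp s := by
  have h : s / a ≤ exp (s / a) := by linarith [add_one_le_exp (s / a)]
  calc s ^ a = a ^ a * (s / a) ^ a := by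
        rw [div_rpow hs ha.le, mul_div_cancel₀ _ (rpow_pos_of_pos ha a).ne']
    _ ≤ a ^ a * exp (s / a) ^ a := by gcongr
    _ = a ^ a * exp s := by rw [← exp_mul, div_mul_cancel₀ _ ha.ne']

lemma exp_neg_le_rpow_self_mul_rpow_neg {a s : ℝ} (ha : 0 < a) (hs : 0 < s) :
    exp (-s) ≤ a ^ a * s ^ (-a) := by
  rw [exp_neg, rpow_neg hs.le, inv_le_comm₀ (exp_pos s) (by positivity), mul_inv,
    inv_inv, ← div_eq_inv_mul, div_le_iff₀ (by positivity), mul_comm]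
  exact rpow_le_rpow_self_mul_exp ha hs.le

lemma integral_rpow_mul_exp_neg_mul_le {a r c : ℝ} (ha : 0 < a) (hr : 0 < r) (hc : 0 ≤ c) :
    ∫ x in 0..c, x ^ (a - 1) * exp (-(r * x)) ≤ (1 / r) ^ a * Gamma a := by
  have hint : IntegrableOn (fun x : ℝ => x ^ (a - 1) * exp (-(r * x))) (Ioi 0) := by
    simpa [rpow_one, neg_mul] using
      integrableOn_rpow_mul_exp_neg_mul_rpow (by linarith : -1 < a - 1) one_pos hr
  rw [integral_of_le hc, ← integral_rpow_mul_exp_neg_mul_Ioi ha hr]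
  refine setIntegral_mono_set hint ?_ Ioc_subset_Ioi_self.eventuallyLE
  exact (ae_restrict_iff' measurableSet_Ioi).2 (ae_of_all _ fun x hx =>
    mul_nonneg (rpow_nonneg (le_of_lt hx) _) (exp_pos _).le)

noncomputable def betaLaplaceIntegrand (a b u x : ℝ) : ℝ :=
  x ^ (a - 1) * (1 - x) ^ (b - 1) * exp (-u * x)

/-- The function `χ_{a,b}` of the paper: the Laplace transform of the unnormalised Beta density. -/
noncomputable def betaLaplace (a b u : ℝ) : ℝ :=
  ∫ x in (0:ℝ)..1, betaLaplaceIntegrand a b u x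

section BetaLaplace

variable {a b : ℝ}

lemma betaLaplaceIntegrand_nonneg (u : ℝ) {x : ℝ} (hx : x ∈ Icc (0:ℝ) 1) :
    0 ≤ betaLaplaceIntegrand a b u x := by
  have : 0 ≤ 1 - x := by linarith [hx.2]
  have := hx.1
  unfold betaLaplaceIntegrand
  positivity

lemma intervalIntegrable_one_sub_rpow (hb : 0 < b) :
    IntervalIntegrable (fun x : ℝ => (1 - x) ^ (b - 1)) volume (1 / 2) 1 := by
  convert (intervalIntegrable_rpow' (by linarith : -1 < b - 1)
    (a := 1 / 2) (b := 0)).comp_sub_left 1 using 1 <;> norm_num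

lemma integral_one_sub_rpow (hb : 0 < b) :
    ∫ x in (1 / 2 : ℝ)..1, (1 - x) ^ (b - 1) = (1 / 2) ^ b / b := by
  rw [integral_comp_sub_left (fun x => x ^ (b - 1)),
    integral_rpow (Or.inl (by linarith)), sub_add_cancel, sub_self, zero_rpow hb.ne']
  norm_num

lemma intervalIntegrable_betaLaplaceIntegrand (ha : 0 < a) (hb : 0 < b) (u : ℝ)
    {p q : ℝ} (hp : 0 ≤ p) (hpq : p ≤ q) (hq : q ≤ 1) :
    IntervalIntegrable (betaLaplaceIntegrand a b u) volume p q := by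
  have hexp : ContinuousOn (fun x : ℝ => exp (-u * x)) univ := by fun_prop
  have hsplit : IntervalIntegrable (betaLaplaceIntegrand a b u) volume 0 1 := by
    refine IntervalIntegrable.trans (b := 1 / 2) ?_ ?_
    · refine ((intervalIntegrable_rpow' (by linarith)).mul_continuousOn ?_).mul_continuousOn
        (hexp.mono (subset_univ _))
      refine ContinuousOn.rpow_const (by fun_prop) fun x hx => Or.inl ?_
      rw [uIcc_of_le (by norm_num)] at hx
      linarith [hx.2]
    · refine ((intervalIntegrable_one_sub_rpow hb).continuousOn_mul ?_).mul_continuousOn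
        (hexp.mono (subset_univ _))
      refine ContinuousOn.rpow_const (by fun_prop) fun x hx => Or.inl ?_
      rw [uIcc_of_le (by norm_num)] at hx
      linarith [hx.1]
  refine hsplit.mono_set ?_
  rw [uIcc_of_le hpq, uIcc_of_le zero_le_one]
  exact Icc_subset_Icc hp hq

lemma exp_neg_half_le (ha : 0 < a) {u : ℝ} (hu : -1 < u) :
    exp (-(u / 2)) ≤ exp (1 / 2) * (2 * a) ^ a * (1 + u) ^ (-a) := by
  have hu' : 0 < 1 + u := by linarith
  calc exp (-(u / 2)) = exp (1 / 2) * exp (-((1 + u) / 2)) := by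
        rw [← exp_add]; congr 1; ring
    _ ≤ exp (1 / 2) * (a ^ a * ((1 + u) / 2) ^ (-a)) := by
        gcongr; exact exp_neg_le_rpow_self_mul_rpow_neg ha (by positivity)
    _ = exp (1 / 2) * (2 * a) ^ a * (1 + u) ^ (-a) := by
        rw [div_rpow hu'.le two_pos.le, mul_rpow two_pos.le ha.le, rpow_neg two_pos.le]
        field_simp

lemma integral_zero_half_betaLaplaceIntegrand_le (ha : 0 < a) (hb : 0 < b) {u : ℝ} (hu : -1 < u) :
    ∫ x in (0:ℝ)..1 / 2, betaLaplaceIntegrand a b u x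
      ≤ 2 ^ |b - 1| * exp (1 / 2) * Gamma a * (1 + u) ^ (-a) := by
  have hr : 0 < 1 + u := by linarith
  calc _ ≤ ∫ x in (0:ℝ)..1 / 2,
          2 ^ |b - 1| * exp (1 / 2) * (x ^ (a - 1) * exp (-((1 + u) * x))) := by
        refine integral_mono_on (by norm_num)
          (intervalIntegrable_betaLaplaceIntegrand ha hb u le_rfl (by norm_num) (by norm_num))
          (((intervalIntegrable_rpow' (by linarith)).mul_continuousOn
            (by fun_prop)).const_mul _) fun x hx => ?_
        have h1 : (1 - x) ^ (b - 1) ≤ 2 ^ |b - 1| :=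
          rpow_le_two_rpow_abs _ (by linarith [hx.2]) (by linarith [hx.1])
        have h2 : exp (-u * x) ≤ exp (1 / 2) * exp (-((1 + u) * x)) := by
          rw [← exp_add, exp_le_exp]; linarith [hx.2]
        have hx0 : 0 ≤ x := hx.1
        calc betaLaplaceIntegrand a b u x
            = x ^ (a - 1) * ((1 - x) ^ (b - 1) * exp (-u * x)) := by
              rw [betaLaplaceIntegrand, mul_assoc]
          _ ≤ x ^ (a - 1) * (2 ^ |b - 1| * (exp (1 / 2) * exp (-((1 + u) * x)))) := by
              gcongr
          _ = _ := by ring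
    _ ≤ 2 ^ |b - 1| * exp (1 / 2) * ((1 / (1 + u)) ^ a * Gamma a) := by
        rw [intervalIntegral.integral_const_mul]
        gcongr
        exact integral_rpow_mul_exp_neg_mul_le ha hr (by norm_num)
    _ = _ := by rw [one_div (1 + u), inv_rpow hr.le, ← rpow_neg hr.le]; ring

lemma integral_half_one_betaLaplaceIntegrand_le (ha : 0 < a) (hb : 0 < b) {u : ℝ} (hu : 0 ≤ u) :
    ∫ x in (1 / 2 : ℝ)..1, betaLaplaceIntegrand a b u x
      ≤ 2 ^ |a - 1| * ((1 / 2) ^ b / b) * exp (-(u / 2)) := by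
  calc _ ≤ ∫ x in (1 / 2 : ℝ)..1, 2 ^ |a - 1| * exp (-(u / 2)) * (1 - x) ^ (b - 1) := by
        refine integral_mono_on (by norm_num)
          (intervalIntegrable_betaLaplaceIntegrand ha hb u (by norm_num) (by norm_num) le_rfl)
          ((intervalIntegrable_one_sub_rpow hb).const_mul _) fun x hx => ?_
        have h1 : x ^ (a - 1) ≤ 2 ^ |a - 1| := rpow_le_two_rpow_abs _ hx.1 hx.2
        have h2 : exp (-u * x) ≤ exp (-(u / 2)) := by
          rw [exp_le_exp]; nlinarith [hx.1]
        have : 0 ≤ 1 - x := by linarith [hx.2]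
        calc betaLaplaceIntegrand a b u x
            = x ^ (a - 1) * exp (-u * x) * (1 - x) ^ (b - 1) := by
              rw [betaLaplaceIntegrand]; ring
          _ ≤ _ := by gcongr
    _ = _ := by rw [intervalIntegral.integral_const_mul, integral_one_sub_rpow hb]; ring

theorem betaLaplace_le (ha : 0 < a) (hb : 0 < b) :
    ∃ C > 0, ∀ u, 0 ≤ u → betaLaplace a b u ≤ C * (1 + u) ^ (-a) := by
  set A := 2 ^ |b - 1| * exp (1 / 2) * Gamma a
  set B := 2 ^ |a - 1| * ((1 / 2) ^ b / b)
  refine ⟨A + B * (exp (1 / 2) * (2 * a) ^ a), by positivity, fun u hu => ?_⟩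
  rw [betaLaplace, ← integral_add_adjacent_intervals
    (intervalIntegrable_betaLaplaceIntegrand ha hb u (q := 1 / 2) le_rfl (by norm_num)
      (by norm_num))
    (intervalIntegrable_betaLaplaceIntegrand ha hb u (p := 1 / 2) (by norm_num) (by norm_num)
      le_rfl)]
  calc _ ≤ A * (1 + u) ^ (-a) + B * exp (-(u / 2)) :=
        add_le_add (integral_zero_half_betaLaplaceIntegrand_le ha hb (by linarith))
          (integral_half_one_betaLaplaceIntegrand_le ha hb hu)
    _ ≤ A * (1 + u) ^ (-a) + B * (exp (1 / 2) * (2 * a) ^ a * (1 + u) ^ (-a)) := by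
        gcongr; exact exp_neg_half_le ha (by linarith)
    _ = _ := by ring

theorem le_betaLaplace (ha : 0 < a) (hb : 0 < b) :
    ∃ c > 0, ∀ u, 0 ≤ u → c * (1 + u) ^ (-a) ≤ betaLaplace a b u := by
  refine ⟨2 ^ (-|b - 1|) * exp (-(1 / 2)) * (2 ^ (-a) / a), by positivity, fun u hu => ?_⟩
  set m := (2 * (1 + u))⁻¹
  have hr : 0 < 1 + u := by linarith
  have hm : 0 < m := by positivity
  have hm_half : m ≤ 1 / 2 := by
    rw [one_div]; exact inv_anti₀ two_pos (by linarith)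
  have hum : u * m ≤ 1 / 2 := by
    rw [← div_eq_mul_inv, div_le_iff₀ (by positivity)]; linarith
  calc _ = 2 ^ (-|b - 1|) * exp (-(1 / 2)) * (m ^ a / a) := by
        rw [inv_rpow (by positivity), mul_rpow two_pos.le hr.le, mul_inv, ← rpow_neg two_pos.le,
          ← rpow_neg hr.le]
        ring
    _ = ∫ x in (0:ℝ)..m, 2 ^ (-|b - 1|) * exp (-(1 / 2)) * x ^ (a - 1) := by
        rw [intervalIntegral.integral_const_mul, integral_rpow (Or.inl (by linarith)),
          sub_add_cancel, zero_rpow ha.ne', sub_zero]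
    _ ≤ ∫ x in (0:ℝ)..m, betaLaplaceIntegrand a b u x := by
        refine integral_mono_on hm.le ((intervalIntegrable_rpow' (by linarith)).const_mul _)
          (intervalIntegrable_betaLaplaceIntegrand ha hb u le_rfl hm.le (by linarith))
          fun x hx => ?_
        have h1 : 2 ^ (-|b - 1|) ≤ (1 - x) ^ (b - 1) :=
          two_rpow_neg_abs_le_rpow _ (by linarith [hx.2]) (by linarith [hx.1])
        have h2 : exp (-(1 / 2)) ≤ exp (-u * x) := by
          rw [exp_le_exp]; nlinarith [hx.2]
        have hx0 : 0 ≤ x := hx.1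
        have : 0 ≤ 1 - x := by linarith [hx.2]
        calc _ ≤ (1 - x) ^ (b - 1) * exp (-u * x) * x ^ (a - 1) := by gcongr
          _ = _ := by rw [betaLaplaceIntegrand]; ring
    _ ≤ betaLaplace a b u :=
        integral_mono_interval le_rfl hm.le (by linarith)
          ((ae_restrict_iff' measurableSet_Ioc).2 (ae_of_all _ fun x hx =>
            betaLaplaceIntegrand_nonneg u (Ioc_subset_Icc_self hx)))
          (intervalIntegrable_betaLaplaceIntegrand ha hb u le_rfl zero_le_one le_rfl)

end BetaLaplace

lemma rpow_neg_sq_add_le_and_le {a r t : ℝ} (ha : 0 ≤ a) (ht : 0 < t) :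
    (r ^ 2 + t) ^ (-a) ≤ (1 + r ^ 2 / (4 * t)) ^ (-a) / t ^ a ∧
      (1 + r ^ 2 / (4 * t)) ^ (-a) / t ^ a ≤ 4 ^ a * (r ^ 2 + t) ^ (-a) := by
  have hscale : (1 + r ^ 2 / (4 * t)) ^ (-a) / t ^ a = (t + r ^ 2 / 4) ^ (-a) := by
    rw [div_eq_mul_inv, ← rpow_neg ht.le, ← mul_rpow (by positivity) ht.le]
    congr 1
    field_simp
  have hpos : 0 < r ^ 2 + t := by positivity
  rw [hscale]
  constructor
  · exact rpow_le_rpow_of_nonpos (by positivity) (by linarith [sq_nonneg r]) (by linarith)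
  · calc (t + r ^ 2 / 4) ^ (-a) ≤ ((r ^ 2 + t) / 4) ^ (-a) :=
          rpow_le_rpow_of_nonpos (by positivity) (by linarith [sq_nonneg r]) (by linarith)
      _ = 4 ^ a * (r ^ 2 + t) ^ (-a) := by
          rw [div_rpow hpos.le (by norm_num), rpow_neg (by norm_num : (0:ℝ) ≤ 4),
            div_inv_eq_mul, mul_comm]

theorem exists_bounds_betaLaplace_sq_div {a b : ℝ} (ha : 0 < a) (hb : 0 < b) :
    ∃ c > 0, ∃ C > 0, ∀ r t : ℝ, 0 < t →
      c * (r ^ 2 + t) ^ (-a) ≤ betaLaplace a b (r ^ 2 / (4 * t)) / t ^ a ∧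
        betaLaplace a b (r ^ 2 / (4 * t)) / t ^ a ≤ C * (r ^ 2 + t) ^ (-a) := by
  obtain ⟨c, hc, hlow⟩ := le_betaLaplace ha hb
  obtain ⟨C, hC, hupp⟩ := betaLaplace_le ha hb
  refine ⟨c, hc, 4 ^ a * C, by positivity, fun r t ht => ?_⟩
  have hu : 0 ≤ r ^ 2 / (4 * t) := by positivity
  obtain ⟨h₁, h₂⟩ := rpow_neg_sq_add_le_and_le (r := r) ha.le ht
  constructor
  · calc c * (r ^ 2 + t) ^ (-a) ≤ c * ((1 + r ^ 2 / (4 * t)) ^ (-a) / t ^ a) := by gcongr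
      _ ≤ _ := by rw [← mul_div_assoc]; gcongr; exact hlow _ hu
  · calc _ ≤ C * ((1 + r ^ 2 / (4 * t)) ^ (-a) / t ^ a) := by
          rw [← mul_div_assoc]; gcongr; exact hupp _ hu
      _ ≤ C * (4 ^ a * (r ^ 2 + t) ^ (-a)) := by gcongr
      _ = _ := by ring

theorem stmt6_general (ν k : ℝ) (hk : 0 < k) (hkν : k < ν)
    (χ : ℝ → ℝ)
    (hχ : χ = fun u => ∫ x in (0:ℝ)..1,
      x ^ (k / 2 - 1) * (1 - x) ^ ((ν - k) / 2 - 1) * Real.exp (-u * x))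
    (F : ℝ → ℝ → ℝ)
    (hF : F = fun r t => χ (r ^ 2 / (4 * t)) / ((2:ℝ) ^ k * Real.Gamma (k / 2) * t ^ (k / 2))) :
    ∃ c > (0:ℝ), ∃ C > (0:ℝ), ∀ r > (0:ℝ), ∀ t > (0:ℝ),
      c * (r ^ 2 + t) ^ (-(k / 2)) ≤ F r t ∧ F r t ≤ C * (r ^ 2 + t) ^ (-(k / 2)) := by
  obtain ⟨c, hc, C, hC, hbounds⟩ :=
    exists_bounds_betaLaplace_sq_div (a := k / 2) (b := (ν - k) / 2) (by positivity) (by linarith)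
  have hD : 0 < (2:ℝ) ^ k * Gamma (k / 2) := by positivity
  refine ⟨c / (2 ^ k * Gamma (k / 2)), by positivity, C / (2 ^ k * Gamma (k / 2)), by positivity,
    fun r _ t ht => ?_⟩
  have hF_eq : F r t = betaLaplace (k / 2) ((ν - k) / 2) (r ^ 2 / (4 * t)) / t ^ (k / 2) /
      (2 ^ k * Gamma (k / 2)) := by
    subst hF hχ
    rw [div_div, mul_comm (t ^ _)]
    rfl
  obtain ⟨hlow, hupp⟩ := hbounds r t ht
  rw [hF_eq, div_mul_eq_mul_div, div_mul_eq_mul_div]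
  exact ⟨div_le_div_of_nonneg_right hlow hD.le, div_le_div_of_nonneg_right hupp hD.le⟩

/-- Two-sided bound `c (r² + t)^(-k/2) ≤ F(r,t) ≤ C (r² + t)^(-k/2)` for the
radial heat supersolution `F` built from Kummer's function. -/
theorem stmt6 (ν k : ℝ) (hν : 1 ≤ ν) (hk : 0 < k) (hkν : k < ν)
    (χ : ℝ → ℝ)
    (hχ : χ = fun u => ∫ x in (0:ℝ)..1,
      x ^ (k / 2 - 1) * (1 - x) ^ ((ν - k) / 2 - 1) * Real.exp (-u * x))
    (F : ℝ → ℝ → ℝ)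
    (hF : F = fun r t => χ (r ^ 2 / (4 * t)) / ((2:ℝ) ^ k * Real.Gamma (k / 2) * t ^ (k / 2))) :
    ∃ c > (0:ℝ), ∃ C > (0:ℝ), ∀ r > (0:ℝ), ∀ t > (0:ℝ),
      c * (r ^ 2 + t) ^ (-(k / 2)) ≤ F r t ∧ F r t ≤ C * (r ^ 2 + t) ^ (-(k / 2)) :=
  stmt6_general ν k hk hkν χ hχ F hF
end
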